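/- arXiv:1009.3640 — 3 statements merged into one kernel-verified Lean document; each statement's English description precedes it below -/
import Mathlib

section
/- Let $R, \delta > 0$ and let $Z$ be a non-negative real random variable satisfying $\Pr(|Z-1| \geq t) \leq R e^{-t/\delta}$ for all $t \geq 0$. Then for any real $2 \leq \ell \leq 1/(2\delta)$, one has $\mathbb{E}[Z^\ell] \leq 1 + \ell\,\mathbb{E}[Z-1] + 2R(\ell\delta)^2$. -/
/-!
For `z ≥ 0` one has `z ^ ℓ ≤ 1 + ℓ (z - 1) + G (|z - 1|)`, where
`G x = ℓ / (ℓ - 1) (e^{(ℓ - 1) x} - 1) - ℓ x` is the primitive vanishing at `0` of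
`g t = ℓ (e^{(ℓ - 1) t} - 1)`: above `1` this is `1 + t ≤ e^t` integrated, below `1` it reduces
to `(1 - t) ^ ℓ + 2 ℓ t ≤ (1 + t) ^ ℓ` on `[0, 1]`. Taking expectations, the linear part gives
`1 + ℓ E[Z - 1]`, and by the layer-cake formula
`E[G(|Z - 1|)] = ∫₀^∞ P(|Z - 1| ≥ t) g(t) dt ≤ R ∫₀^∞ e^{-t/δ} g(t) dt`,
which equals `R ℓ (ℓ - 1) δ² / (1 - (ℓ - 1) δ) ≤ 2 R (ℓ δ)²` as soon as `ℓ δ ≤ 1/2`.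
-/

open MeasureTheory Real Set

noncomputable def expMajorant (ℓ x : ℝ) : ℝ :=
  ℓ / (ℓ - 1) * (exp ((ℓ - 1) * x) - 1) - ℓ * x

noncomputable def expMajorantDeriv (ℓ t : ℝ) : ℝ :=
  ℓ * (exp ((ℓ - 1) * t) - 1)

section Calculus

variable {ℓ : ℝ}

lemma continuous_expMajorantDeriv (ℓ : ℝ) : Continuous (expMajorantDeriv ℓ) := by
  unfold expMajorantDeriv
  fun_prop

lemma expMajorantDeriv_nonneg (hℓ : 1 ≤ ℓ) {t : ℝ} (ht : 0 ≤ t) : 0 ≤ expMajorantDeriv ℓ t :=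
  mul_nonneg (by linarith) (sub_nonneg.2 (one_le_exp (mul_nonneg (by linarith) ht)))

lemma hasDerivAt_expMajorant (hℓ : ℓ ≠ 1) (x : ℝ) :
    HasDerivAt (expMajorant ℓ) (expMajorantDeriv ℓ x) x := by
  have hexp : HasDerivAt (fun t => exp ((ℓ - 1) * t)) (exp ((ℓ - 1) * x) * (ℓ - 1)) x := by
    simpa using ((hasDerivAt_id x).const_mul (ℓ - 1)).exp
  have h : HasDerivAt (expMajorant ℓ)
      (ℓ / (ℓ - 1) * (exp ((ℓ - 1) * x) * (ℓ - 1)) - ℓ * 1) x :=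
    ((hexp.sub_const 1).const_mul (ℓ / (ℓ - 1))).sub ((hasDerivAt_id x).const_mul ℓ)
  convert h using 1
  have : ℓ - 1 ≠ 0 := sub_ne_zero.2 hℓ
  rw [expMajorantDeriv]
  field_simp

lemma expMajorant_eq_integral (hℓ : ℓ ≠ 1) (x : ℝ) :
    expMajorant ℓ x = ∫ t in 0..x, expMajorantDeriv ℓ t := by
  rw [intervalIntegral.integral_eq_sub_of_hasDerivAt (fun t _ => hasDerivAt_expMajorant hℓ t)
    ((continuous_expMajorantDeriv ℓ).intervalIntegrable 0 x)]
  simp [expMajorant]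

lemma one_add_rpow_le_expMajorant (hℓ : 1 < ℓ) {x : ℝ} (hx : 0 ≤ x) :
    (1 + x) ^ ℓ ≤ 1 + ℓ * x + expMajorant ℓ x := by
  set φ : ℝ → ℝ := fun t => 1 + ℓ * t + expMajorant ℓ t - (1 + t) ^ ℓ
  have hφ (t : ℝ) : HasDerivAt φ (ℓ * 1 + expMajorantDeriv ℓ t - ℓ * (1 + t) ^ (ℓ - 1)) t := by
    have hpow : HasDerivAt (fun t => (1 + t) ^ ℓ) (ℓ * (1 + t) ^ (ℓ - 1)) t := by
      simpa using ((hasDerivAt_id t).const_add 1).rpow_const (p := ℓ) (Or.inr hℓ.le)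
    exact ((((hasDerivAt_id t).const_mul ℓ).const_add 1).add
      (hasDerivAt_expMajorant hℓ.ne' t)).sub hpow
  have hmono : MonotoneOn φ (Ici 0) := by
    refine monotoneOn_of_hasDerivWithinAt_nonneg (convex_Ici 0)
      (fun t _ => (hφ t).continuousAt.continuousWithinAt) (fun t _ => (hφ t).hasDerivWithinAt) ?_
    intro t ht
    rw [interior_Ici, mem_Ioi] at ht
    have hle : (1 + t) ^ (ℓ - 1) ≤ exp ((ℓ - 1) * t) :=
      calc (1 + t) ^ (ℓ - 1) ≤ exp t ^ (ℓ - 1) :=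
            rpow_le_rpow (by linarith) (by linarith [add_one_le_exp t]) (by linarith)
        _ = exp ((ℓ - 1) * t) := by rw [← exp_mul, mul_comm]
    rw [expMajorantDeriv]
    nlinarith
  simpa [φ, expMajorant] using hmono self_mem_Ici hx hx

lemma one_sub_rpow_add_le_one_add_rpow (hℓ : 2 ≤ ℓ) {t : ℝ} (ht₀ : 0 ≤ t) (ht₁ : t ≤ 1) :
    (1 - t) ^ ℓ + 2 * ℓ * t ≤ (1 + t) ^ ℓ := by
  set ψ : ℝ → ℝ := fun s => (1 + s) ^ ℓ - (1 - s) ^ ℓ - 2 * ℓ * s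
  have hψ (s : ℝ) :
      HasDerivAt ψ (ℓ * (1 + s) ^ (ℓ - 1) - -(ℓ * (1 - s) ^ (ℓ - 1)) - 2 * ℓ * 1) s := by
    have hplus : HasDerivAt (fun s => (1 + s) ^ ℓ) (ℓ * (1 + s) ^ (ℓ - 1)) s := by
      simpa using ((hasDerivAt_id s).const_add 1).rpow_const (p := ℓ) (Or.inr (by linarith))
    have hminus : HasDerivAt (fun s => (1 - s) ^ ℓ) (-(ℓ * (1 - s) ^ (ℓ - 1))) s := by
      simpa using ((hasDerivAt_id s).const_sub 1).rpow_const (p := ℓ) (Or.inr (by linarith))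
    exact (hplus.sub hminus).sub ((hasDerivAt_id s).const_mul (2 * ℓ))
  have hmono : MonotoneOn ψ (Icc 0 1) := by
    refine monotoneOn_of_hasDerivWithinAt_nonneg (convex_Icc 0 1)
      (fun s _ => (hψ s).continuousAt.continuousWithinAt) (fun s _ => (hψ s).hasDerivWithinAt) ?_
    intro s hs
    rw [interior_Icc] at hs
    -- Bernoulli: `(1 ± s) ^ (ℓ - 1) ≥ 1 ± (ℓ - 1) * s`, so the two powers sum to at least 2.
    have hplus := one_add_mul_self_le_rpow_one_add (s := s) (by linarith [hs.1])
      (p := ℓ - 1) (by linarith)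
    have hminus := one_add_mul_self_le_rpow_one_add (s := -s) (by linarith [hs.2])
      (p := ℓ - 1) (by linarith)
    rw [← sub_eq_add_neg] at hminus
    nlinarith
  have := hmono (left_mem_Icc.2 zero_le_one) ⟨ht₀, ht₁⟩ ht₀
  norm_num [ψ] at this
  linarith

lemma rpow_le_one_add_mul_sub_add_expMajorant (hℓ : 2 ≤ ℓ) {z : ℝ} (hz : 0 ≤ z) :
    z ^ ℓ ≤ 1 + ℓ * (z - 1) + expMajorant ℓ |z - 1| := by
  rcases le_total 1 z with h | h
  · have := one_add_rpow_le_expMajorant (ℓ := ℓ) (by linarith) (sub_nonneg.2 h)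
    rw [abs_of_nonneg (sub_nonneg.2 h)]
    simpa using this
  · have hneg := one_sub_rpow_add_le_one_add_rpow hℓ (sub_nonneg.2 h) (by linarith)
    have hpos := one_add_rpow_le_expMajorant (ℓ := ℓ) (by linarith) (sub_nonneg.2 h)
    rw [abs_of_nonpos (sub_nonpos.2 h), neg_sub]
    rw [sub_sub_cancel] at hneg
    linarith

end Calculus

section ExpIntegrals

variable {ℓ δ : ℝ}

lemma exp_neg_div_mul_expMajorantDeriv (t : ℝ) :
    exp (-t / δ) * expMajorantDeriv ℓ t = ℓ * exp ((ℓ - 1 - δ⁻¹) * t) - ℓ * exp (-δ⁻¹ * t) := by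
  rw [expMajorantDeriv, sub_mul, sub_eq_add_neg _ δ⁻¹, add_mul, exp_add]
  ring_nf

lemma integrableOn_exp_neg_div_mul_expMajorantDeriv (hδ : 0 < δ) (h : (ℓ - 1) * δ < 1) :
    IntegrableOn (fun t => exp (-t / δ) * expMajorantDeriv ℓ t) (Ioi 0) := by
  have ha : ℓ - 1 - δ⁻¹ < 0 := by rwa [sub_neg, ← one_div, lt_div_iff₀ hδ]
  simp_rw [exp_neg_div_mul_expMajorantDeriv]
  exact ((integrableOn_exp_mul_Ioi ha 0).const_mul ℓ).sub
    ((integrableOn_exp_mul_Ioi (neg_neg_of_pos (inv_pos.2 hδ)) 0).const_mul ℓ)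

lemma integral_exp_neg_div_mul_expMajorantDeriv (hδ : 0 < δ) (h : (ℓ - 1) * δ < 1) :
    ∫ t in Ioi 0, exp (-t / δ) * expMajorantDeriv ℓ t =
      ℓ * (ℓ - 1) * δ ^ 2 / (1 - (ℓ - 1) * δ) := by
  have ha : ℓ - 1 - δ⁻¹ < 0 := by rwa [sub_neg, ← one_div, lt_div_iff₀ hδ]
  have hb : -δ⁻¹ < 0 := neg_neg_of_pos (inv_pos.2 hδ)
  simp_rw [exp_neg_div_mul_expMajorantDeriv]
  rw [integral_sub ((integrableOn_exp_mul_Ioi ha 0).const_mul ℓ)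
    ((integrableOn_exp_mul_Ioi hb 0).const_mul ℓ), integral_const_mul, integral_const_mul,
    integral_exp_mul_Ioi ha, integral_exp_mul_Ioi hb]
  have h1 : 1 - (ℓ - 1) * δ ≠ 0 := by linarith
  rw [show ℓ - 1 - δ⁻¹ = -(1 - (ℓ - 1) * δ) / δ by field_simp; ring]
  simp only [mul_zero, exp_zero]
  field_simp
  ring

lemma integral_exp_neg_div_mul_expMajorantDeriv_le (hℓ : 1 ≤ ℓ) (hδ : 0 < δ)
    (hℓδ : ℓ * δ ≤ 1 / 2) :
    ∫ t in Ioi 0, exp (-t / δ) * expMajorantDeriv ℓ t ≤ 2 * (ℓ * δ) ^ 2 := by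
  have h : (ℓ - 1) * δ ≤ 1 / 2 := by linarith
  rw [integral_exp_neg_div_mul_expMajorantDeriv hδ (by linarith), div_le_iff₀ (by linarith)]
  nlinarith [sq_nonneg (ℓ * δ)]

end ExpIntegrals

section TailIntegral

variable {Ω : Type*} [MeasurableSpace Ω] {μ : Measure Ω} [IsFiniteMeasure μ] {X : Ω → ℝ}
  {g h : ℝ → ℝ}

lemma lintegral_primitive_comp_le_of_measureReal_le (hX₀ : 0 ≤ᵐ[μ] X) (hX : AEMeasurable X μ)
    (hg : Continuous g) (hg₀ : ∀ t, 0 ≤ t → 0 ≤ g t)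
    (hhg : IntegrableOn (fun t => h t * g t) (Ioi 0))
    (htail : ∀ t, 0 < t → μ.real {ω | t ≤ X ω} ≤ h t) :
    ∫⁻ ω, ENNReal.ofReal (∫ t in 0..X ω, g t) ∂μ ≤ ENNReal.ofReal (∫ t in Ioi 0, h t * g t) := by
  have hh₀ : ∀ t, 0 < t → 0 ≤ h t := fun t ht => measureReal_nonneg.trans (htail t ht)
  rw [lintegral_comp_eq_lintegral_meas_le_mul μ hX₀ hX (fun t _ => hg.intervalIntegrable 0 t)
      (ae_restrict_of_forall_mem measurableSet_Ioi fun t ht => hg₀ t (le_of_lt ht)),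
    ofReal_integral_eq_lintegral_ofReal hhg
      (ae_restrict_of_forall_mem measurableSet_Ioi fun t ht =>
        mul_nonneg (hh₀ t ht) (hg₀ t (le_of_lt ht)))]
  refine setLIntegral_mono' measurableSet_Ioi fun t ht => ?_
  rw [ENNReal.ofReal_mul (hh₀ t ht)]
  gcongr
  exact (ENNReal.le_ofReal_iff_toReal_le (measure_ne_top μ _) (hh₀ t ht)).2 (htail t ht)

lemma integrable_primitive_comp_of_measureReal_le (hX₀ : 0 ≤ᵐ[μ] X) (hX : AEMeasurable X μ)
    (hg : Continuous g) (hg₀ : ∀ t, 0 ≤ t → 0 ≤ g t)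
    (hhg : IntegrableOn (fun t => h t * g t) (Ioi 0))
    (htail : ∀ t, 0 < t → μ.real {ω | t ≤ X ω} ≤ h t) :
    Integrable (fun ω => ∫ t in 0..X ω, g t) μ := by
  have hprim : Continuous fun x => ∫ t in 0..x, g t :=
    intervalIntegral.continuous_primitive (fun a b => hg.intervalIntegrable a b) 0
  have hnonneg : 0 ≤ᵐ[μ] fun ω => ∫ t in 0..X ω, g t :=
    hX₀.mono fun ω hω => intervalIntegral.integral_nonneg hω fun t ht => hg₀ t ht.1
  refine ⟨(hprim.measurable.comp_aemeasurable hX).aestronglyMeasurable, ?_⟩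
  rw [hasFiniteIntegral_iff_ofReal hnonneg]
  exact (lintegral_primitive_comp_le_of_measureReal_le hX₀ hX hg hg₀ hhg htail).trans_lt
    ENNReal.ofReal_lt_top

lemma integral_primitive_comp_le_of_measureReal_le (hX₀ : 0 ≤ᵐ[μ] X) (hX : AEMeasurable X μ)
    (hg : Continuous g) (hg₀ : ∀ t, 0 ≤ t → 0 ≤ g t)
    (hhg : IntegrableOn (fun t => h t * g t) (Ioi 0))
    (htail : ∀ t, 0 < t → μ.real {ω | t ≤ X ω} ≤ h t) :
    ∫ ω, (∫ t in 0..X ω, g t) ∂μ ≤ ∫ t in Ioi 0, h t * g t := by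
  have hnonneg : 0 ≤ᵐ[μ] fun ω => ∫ t in 0..X ω, g t :=
    hX₀.mono fun ω hω => intervalIntegral.integral_nonneg hω fun t ht => hg₀ t ht.1
  rw [integral_eq_lintegral_of_nonneg_ae hnonneg
    (integrable_primitive_comp_of_measureReal_le hX₀ hX hg hg₀ hhg htail).1]
  exact ENNReal.toReal_le_of_le_ofReal
    (setIntegral_nonneg measurableSet_Ioi fun t ht => mul_nonneg
      (measureReal_nonneg.trans (htail t ht)) (hg₀ t (le_of_lt ht)))
    (lintegral_primitive_comp_le_of_measureReal_le hX₀ hX hg hg₀ hhg htail)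

end TailIntegral

section ExponentialTail

variable {Ω : Type*} [MeasurableSpace Ω] {μ : Measure Ω} [IsFiniteMeasure μ] {X : Ω → ℝ}
  {R δ ℓ : ℝ}

lemma integrable_expMajorant_comp (hX₀ : 0 ≤ᵐ[μ] X) (hX : AEMeasurable X μ) (hδ : 0 < δ)
    (hℓ : 1 < ℓ) (hℓδ : (ℓ - 1) * δ < 1)
    (htail : ∀ t, 0 < t → μ.real {ω | t ≤ X ω} ≤ R * exp (-t / δ)) :
    Integrable (fun ω => expMajorant ℓ (X ω)) μ := by
  have hweight : IntegrableOn (fun t => R * exp (-t / δ) * expMajorantDeriv ℓ t) (Ioi 0) := by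
    simp_rw [mul_assoc]
    exact (integrableOn_exp_neg_div_mul_expMajorantDeriv hδ hℓδ).const_mul R
  simp_rw [expMajorant_eq_integral hℓ.ne']
  exact integrable_primitive_comp_of_measureReal_le hX₀ hX (continuous_expMajorantDeriv ℓ)
    (fun _ => expMajorantDeriv_nonneg hℓ.le) hweight htail

lemma integral_expMajorant_comp_le (hX₀ : 0 ≤ᵐ[μ] X) (hX : AEMeasurable X μ) (hR : 0 ≤ R)
    (hδ : 0 < δ) (hℓ : 1 < ℓ) (hℓδ : ℓ * δ ≤ 1 / 2)
    (htail : ∀ t, 0 < t → μ.real {ω | t ≤ X ω} ≤ R * exp (-t / δ)) :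
    ∫ ω, expMajorant ℓ (X ω) ∂μ ≤ 2 * R * (ℓ * δ) ^ 2 := by
  have hweight : IntegrableOn (fun t => R * exp (-t / δ) * expMajorantDeriv ℓ t) (Ioi 0) := by
    simp_rw [mul_assoc]
    exact (integrableOn_exp_neg_div_mul_expMajorantDeriv hδ (by linarith)).const_mul R
  simp_rw [expMajorant_eq_integral hℓ.ne']
  calc ∫ ω, (∫ t in 0..X ω, expMajorantDeriv ℓ t) ∂μ
      ≤ ∫ t in Ioi 0, R * exp (-t / δ) * expMajorantDeriv ℓ t :=
        integral_primitive_comp_le_of_measureReal_le hX₀ hX (continuous_expMajorantDeriv ℓ)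
          (fun _ => expMajorantDeriv_nonneg hℓ.le) hweight htail
    _ = R * ∫ t in Ioi 0, exp (-t / δ) * expMajorantDeriv ℓ t := by
        simp_rw [mul_assoc, integral_const_mul]
    _ ≤ R * (2 * (ℓ * δ) ^ 2) := by
        gcongr
        exact integral_exp_neg_div_mul_expMajorantDeriv_le hℓ.le hδ hℓδ
    _ = 2 * R * (ℓ * δ) ^ 2 := by ring

end ExponentialTail

theorem moment_bound_of_tail_general {Ω : Type*} [MeasurableSpace Ω] (μ : Measure Ω)
    [IsProbabilityMeasure μ] (R δ : ℝ) (hR : 0 < R) (hδ : 0 < δ)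
    (Z : Ω → ℝ) (hZ0 : ∀ ω, 0 ≤ Z ω) (hZint : Integrable Z μ)
    (htail : ∀ t : ℝ, 0 ≤ t → (μ {ω | t ≤ |Z ω - 1|}).toReal ≤ R * Real.exp (-t / δ))
    (ℓ : ℝ) (hℓ2 : 2 ≤ ℓ) (hℓδ : ℓ ≤ 1 / (2 * δ)) :
    ∫ ω, Z ω ^ ℓ ∂μ ≤ 1 + ℓ * ∫ ω, (Z ω - 1) ∂μ + 2 * R * (ℓ * δ) ^ 2 := by
  have hℓδ' : ℓ * δ ≤ 1 / 2 := by
    rw [le_div_iff₀ (by positivity)] at hℓδ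
    linarith
  have hX₀ : 0 ≤ᵐ[μ] fun ω => |Z ω - 1| := ae_of_all _ fun ω => abs_nonneg _
  have hX : AEMeasurable (fun ω => |Z ω - 1|) μ := (hZint.aemeasurable.sub_const 1).abs
  have htail' (t : ℝ) (ht : 0 < t) : μ.real {ω | t ≤ |Z ω - 1|} ≤ R * exp (-t / δ) :=
    htail t ht.le
  have hGint := integrable_expMajorant_comp (ℓ := ℓ) hX₀ hX hδ (by linarith) (by linarith) htail'
  have hsub : Integrable (fun ω => Z ω - 1) μ := hZint.sub (integrable_const 1)
  have hlin : Integrable (fun ω => 1 + ℓ * (Z ω - 1)) μ :=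
    (integrable_const 1).add (hsub.const_mul ℓ)
  calc ∫ ω, Z ω ^ ℓ ∂μ ≤ ∫ ω, (1 + ℓ * (Z ω - 1) + expMajorant ℓ |Z ω - 1|) ∂μ :=
        integral_mono_of_nonneg (ae_of_all _ fun ω => rpow_nonneg (hZ0 ω) ℓ) (hlin.add hGint)
          (ae_of_all _ fun ω => rpow_le_one_add_mul_sub_add_expMajorant hℓ2 (hZ0 ω))
    _ = 1 + ℓ * ∫ ω, (Z ω - 1) ∂μ + ∫ ω, expMajorant ℓ |Z ω - 1| ∂μ := by
        rw [integral_add hlin hGint, integral_add (integrable_const 1) (hsub.const_mul ℓ),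
          integral_const_mul]
        simp
    _ ≤ 1 + ℓ * ∫ ω, (Z ω - 1) ∂μ + 2 * R * (ℓ * δ) ^ 2 := by
        gcongr
        exact integral_expMajorant_comp_le hX₀ hX hR.le hδ (by linarith) hℓδ' htail'

/-- If a nonnegative integrable random variable `Z` satisfies `Pr(|Z-1| ≥ t) ≤ R e^{-t/δ}`
for all `t ≥ 0`, then for any real `2 ≤ ℓ ≤ 1/(2δ)`,
`E[Z^ℓ] ≤ 1 + ℓ E[Z-1] + 2R(ℓδ)²`. -/
theorem moment_bound_of_tail {Ω : Type*} [MeasurableSpace Ω] (μ : Measure Ω)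
    [IsProbabilityMeasure μ] (R δ : ℝ) (hR : 0 < R) (hδ : 0 < δ)
    (Z : Ω → ℝ) (hZm : Measurable Z) (hZ0 : ∀ ω, 0 ≤ Z ω) (hZint : Integrable Z μ)
    (htail : ∀ t : ℝ, 0 ≤ t → (μ {ω | t ≤ |Z ω - 1|}).toReal ≤ R * Real.exp (-t / δ))
    (ℓ : ℝ) (hℓ2 : 2 ≤ ℓ) (hℓδ : ℓ ≤ 1 / (2 * δ)) :
    ∫ ω, Z ω ^ ℓ ∂μ ≤ 1 + ℓ * ∫ ω, (Z ω - 1) ∂μ + 2 * R * (ℓ * δ) ^ 2 :=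
  moment_bound_of_tail_general μ R δ hR hδ Z hZ0 hZint htail ℓ hℓ2 hℓδ
end

section
/- For all real numbers $x \geq -1$ and real $\ell \geq 2$: $(1+x)^\ell \leq 1 + \ell x + \sum_{k=2}^{\lfloor\ell\rfloor} \frac{\ell^k}{k!}|x|^k + \frac{\ell^{\lfloor\ell\rfloor}}{\lfloor\ell\rfloor!}|x|^{\lfloor\ell\rfloor+1}$. -/
open Finset

-- coefficient bound: for 2 ≤ k ≤ n, (C(n,k) + t*C(n,k-1)) ≤ ℓ^k / k! where ℓ = n + t, 0 ≤ t ≤ 1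
lemma coeff_bound (n k : ℕ) (t : ℝ) (ht0 : 0 ≤ t) (ht1 : t ≤ 1) (hk2 : 2 ≤ k) (hkn : k ≤ n) :
    (n.choose k : ℝ) + t * n.choose (k - 1) ≤ ((n : ℝ) + t) ^ k / (Nat.factorial k) := by
  obtain ⟨m, rfl⟩ : ∃ m, k = m + 1 := ⟨k - 1, by omega⟩
  rw [le_div_iff₀ (by positivity)]
  have hmn : m + 1 ≤ n := hkn
  have h1 : ((m+1).factorial : ℝ) * (n.choose (m+1) : ℝ) = (n.descFactorial (m+1) : ℝ) := by
    rw [Nat.descFactorial_eq_factorial_mul_choose]; push_cast; ring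
  have h2 : ((m+1).factorial : ℝ) * (n.choose m : ℝ) = (m+1) * (n.descFactorial m : ℝ) := by
    rw [Nat.descFactorial_eq_factorial_mul_choose, Nat.factorial_succ]; push_cast; ring
  have hdf : (n.descFactorial (m+1) : ℝ) = ((n:ℝ) - m) * n.descFactorial m := by
    rw [Nat.descFactorial_succ]; push_cast [Nat.cast_sub (by omega : m ≤ n)]; ring
  have key : ((n.choose (m+1) : ℝ) + t * n.choose m) * (m+1).factorial
      = (n.descFactorial m : ℝ) * (((n:ℝ) - m) + t * (m+1)) := by
    have := h1; have := h2
    nlinarith [h1, h2, hdf]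
  simp only [Nat.add_sub_cancel]
  rw [key]
  have hdfle : (n.descFactorial m : ℝ) ≤ ((n:ℝ) + t) ^ m := by
    calc (n.descFactorial m : ℝ) ≤ ((n:ℝ)) ^ m := by
          exact_mod_cast Nat.descFactorial_le_pow n m
      _ ≤ ((n:ℝ) + t) ^ m := by
          apply pow_le_pow_left₀ (by positivity) (by linarith)
  have hlin : ((n:ℝ) - m) + t * (m+1) ≤ (n:ℝ) + t := by nlinarith [Nat.cast_nonneg (α := ℝ) m]
  have hnm : (0:ℝ) ≤ (n:ℝ) - m := by
    have : (m:ℝ) ≤ n := by exact_mod_cast (by omega : m ≤ n)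
    linarith
  calc (n.descFactorial m : ℝ) * (((n:ℝ) - m) + t * (m+1))
      ≤ ((n:ℝ) + t) ^ m * ((n:ℝ) + t) := by
        apply mul_le_mul hdfle hlin (by positivity) (by positivity)
    _ = ((n:ℝ) + t) ^ (m+1) := by ring

/-- Taylor-expansion bound: for real `x ≥ -1` and real `ℓ ≥ 2`,
`(1+x)^ℓ ≤ 1 + ℓx + ∑_{k=2}^{⌊ℓ⌋} (ℓ^k/k!)|x|^k + (ℓ^⌊ℓ⌋/⌊ℓ⌋!)|x|^{⌊ℓ⌋+1}`. -/
theorem one_add_rpow_le (x ℓ : ℝ) (hx : -1 ≤ x) (hℓ : 2 ≤ ℓ) :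
    (1 + x) ^ ℓ ≤ 1 + ℓ * x
      + ∑ k ∈ Finset.Icc 2 ⌊ℓ⌋₊, ℓ ^ k / (Nat.factorial k) * |x| ^ k
      + ℓ ^ ⌊ℓ⌋₊ / (Nat.factorial ⌊ℓ⌋₊) * |x| ^ (⌊ℓ⌋₊ + 1) := by
  set n := ⌊ℓ⌋₊ with hn
  have hℓ0 : 0 ≤ ℓ := by linarith
  have hn2 : 2 ≤ n := Nat.le_floor (by exact_mod_cast hℓ)
  have hnℓ : (n : ℝ) ≤ ℓ := Nat.floor_le hℓ0
  have hℓn1 : ℓ < n + 1 := Nat.lt_floor_add_one ℓ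
  set t := ℓ - n with htdef
  have ht0 : 0 ≤ t := by simp [htdef]; linarith
  have ht1 : t ≤ 1 := by simp [htdef]; linarith
  have h1x : (0:ℝ) ≤ 1 + x := by linarith
  -- Step 1: (1+x)^ℓ ≤ (1+x)^n * (1 + t*x)
  have step1 : (1 + x) ^ ℓ ≤ (1 + x) ^ n * (1 + t * x) := by
    have hsplit : (1 + x) ^ ℓ = (1 + x) ^ (n:ℝ) * (1 + x) ^ t := by
      rw [← Real.rpow_add' h1x (by rw [htdef]; ring_nf; linarith)]
      congr 1; rw [htdef]; ring
    rw [hsplit, Real.rpow_natCast]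
    exact mul_le_mul_of_nonneg_left
      (rpow_one_add_le_one_add_mul_self hx ht0 ht1) (by positivity)
  refine step1.trans ?_
  -- Step 2: expand (1+x)^n * (1 + t*x)
  have hbinom : (1 + x) ^ n = ∑ k ∈ range (n+1), (n.choose k : ℝ) * x ^ k := by
    rw [add_comm]
    rw [add_pow]
    simp [mul_comm]
  have expand : (1 + x) ^ n * (1 + t * x)
      = 1 + ℓ * x + (∑ k ∈ Finset.Icc 2 n, ((n.choose k : ℝ) + t * n.choose (k-1)) * x ^ k)
        + t * x ^ (n+1) := by
    rw [hbinom, mul_add, mul_one]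
    have hA : ∑ k ∈ range (n+1), (n.choose k : ℝ) * x ^ k
        = 1 + (n:ℝ) * x + ∑ k ∈ Finset.Icc 2 n, (n.choose k : ℝ) * x ^ k := by
      rw [range_eq_Ico, Finset.sum_eq_sum_Ico_succ_bot (by omega),
        Finset.sum_eq_sum_Ico_succ_bot (by omega), ← Finset.Ico_add_one_right_eq_Icc]
      simp
      ring
    have hB : (∑ k ∈ range (n+1), (n.choose k : ℝ) * x ^ k) * (t * x)
        = t * x + (∑ k ∈ Finset.Icc 2 n, (t * n.choose (k-1)) * x ^ k) + t * x ^ (n+1) := by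
      have : (∑ k ∈ range (n+1), (n.choose k : ℝ) * x ^ k) * (t * x)
          = ∑ k ∈ range (n+1), t * (n.choose k : ℝ) * x ^ (k+1) := by
        rw [Finset.sum_mul]; apply Finset.sum_congr rfl; intro k _; ring
      rw [this]
      have hre : ∑ k ∈ range (n+1), t * (n.choose k : ℝ) * x ^ (k+1)
          = ∑ j ∈ Ico 1 (n+2), t * (n.choose (j-1) : ℝ) * x ^ j := by
        rw [Finset.sum_Ico_eq_sum_range]
        simp only [Nat.add_sub_cancel, Nat.add_sub_cancel_left]
        exact Finset.sum_congr rfl fun k _ => by ring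
      rw [hre, Finset.sum_eq_sum_Ico_succ_bot (by omega),
        show n + 2 = (n+1) + 1 from rfl, Finset.sum_Ico_succ_top (by omega),
        ← Finset.Ico_add_one_right_eq_Icc]
      simp
      ring
    rw [hB, hA]
    have hsum : (∑ k ∈ Finset.Icc 2 n, (n.choose k : ℝ) * x ^ k)
        + (∑ k ∈ Finset.Icc 2 n, (t * n.choose (k-1)) * x ^ k)
        = ∑ k ∈ Finset.Icc 2 n, ((n.choose k : ℝ) + t * n.choose (k-1)) * x ^ k := by
      rw [← Finset.sum_add_distrib]
      exact Finset.sum_congr rfl fun k _ => by ring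
    linear_combination hsum + x * htdef
  rw [expand]
  -- Step 3: termwise bounds
  gcongr 1 + ℓ * x + ?_ + ?_
  · apply Finset.sum_le_sum
    intro k hk
    simp only [Finset.mem_Icc] at hk
    have hc := coeff_bound n k t ht0 ht1 hk.1 hk.2
    have hcnn : (0:ℝ) ≤ (n.choose k : ℝ) + t * n.choose (k-1) := by positivity
    calc ((n.choose k : ℝ) + t * n.choose (k-1)) * x ^ k
        ≤ ((n.choose k : ℝ) + t * n.choose (k-1)) * |x| ^ k := by
          apply mul_le_mul_of_nonneg_left _ hcnn
          calc x ^ k ≤ |x ^ k| := le_abs_self _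
            _ = |x| ^ k := abs_pow x k
      _ ≤ ℓ ^ k / (Nat.factorial k) * |x| ^ k := by
          apply mul_le_mul_of_nonneg_right _ (by positivity)
          calc (n.choose k : ℝ) + t * n.choose (k-1) ≤ ((n:ℝ) + t) ^ k / (Nat.factorial k) := hc
            _ = ℓ ^ k / (Nat.factorial k) := by rw [htdef]; ring_nf
  · have h1 : t * x ^ (n+1) ≤ t * |x| ^ (n+1) := by
      apply mul_le_mul_of_nonneg_left _ ht0
      calc x ^ (n+1) ≤ |x ^ (n+1)| := le_abs_self _
        _ = |x| ^ (n+1) := abs_pow _ _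
    have h2 : t ≤ ℓ ^ n / (Nat.factorial n) := by
      rw [le_div_iff₀ (by positivity)]
      have : (Nat.factorial n : ℝ) ≤ ℓ ^ n := by
        calc (Nat.factorial n : ℝ) ≤ (n:ℝ) ^ n := by exact_mod_cast Nat.factorial_le_pow n
          _ ≤ ℓ ^ n := pow_le_pow_left₀ (by positivity) hnℓ n
      nlinarith [(Nat.cast_pos (α := ℝ)).mpr (Nat.factorial_pos n)]
    calc t * x ^ (n+1) ≤ t * |x| ^ (n+1) := h1
      _ ≤ ℓ ^ n / (Nat.factorial n) * |x| ^ (n+1) := by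
          apply mul_le_mul_of_nonneg_right h2 (by positivity)
end

section
/- Let $f: \{0,1\}^n \to \mathbb{R}$ with $\|f\|_1 = \mathbb{E}_x[|f(x)|] = 1$ and $\|f\|_\infty \leq M$ for some $M \geq 2$. Then $\sum_{|w|=2} \hat{f}(w)^2 \leq C(\log M)^2$ for some universal constant $C > 0$. -/
/-!
Let `g = ∑_{|w| = d} f̂(w) χ_w` be the level-`d` part of `f` and `W = ∑_{|w| = d} f̂(w)²`, so that
`𝔼[f g] = W`. Bonami's hypercontractive inequality `𝔼[g^{2k}] ≤ ((2k-1)^d W)^k`, proved by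
induction on `n` from the two-point inequality `(a+b)^{2k} + (a-b)^{2k} ≤ 2 (a² + (2k-1) b²)^k`
and Minkowski's inequality in `L^k`, controls the large values of `g`. Bounding `f g` by
`|f| t` where `|g| ≤ t` and by `M |g|^{2k} / t^{2k-1}` elsewhere gives
`W ≤ t + M ((2k-1)^d W)^k / t^{2k-1}` for every `t > 0`; with `t = e √((2k-1)^d W)` and
`M ≤ e^{2k-1}` this yields `W ≤ 16 (2k-1)^d`, and `2k - 1 ≈ log M` gives the theorem.
This is the dual form of the `(p, 2)`-hypercontractivity argument.
-/

open Finset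

/-- The Fourier coefficient `f̂(w) = 𝔼_x[(-1)^{w·x} f(x)]` of `f : {0,1}ⁿ → ℝ`. -/
noncomputable def boolFourier {n : ℕ} (f : (Fin n → Bool) → ℝ) (w : Fin n → Bool) : ℝ :=
  (∑ x : Fin n → Bool, (-1 : ℝ) ^ (univ.filter fun i => w i && x i).card * f x) / 2 ^ n

/-- The Hamming weight of `w ∈ {0,1}ⁿ`. -/
def hammingWt {n : ℕ} (w : Fin n → Bool) : ℕ := (univ.filter fun i => w i = true).card

theorem Nat.choose_two_mul_le_pow_mul_choose {k j : ℕ} (hj : j ≤ k) :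
    (2 * k).choose (2 * j) ≤ (2 * k - 1) ^ j * k.choose j := by
  induction j with
  | zero => simp
  | succ j ih =>
    have h1 := Nat.choose_succ_right_eq (2 * k) (2 * j)
    have h2 := Nat.choose_succ_right_eq (2 * k) (2 * j + 1)
    have h3 := Nat.choose_succ_right_eq k j
    have ih := ih (by omega)
    refine Nat.le_of_mul_le_mul_right (c := (2 * j + 2) * (2 * j + 1)) ?_ (by positivity)
    calc (2 * k).choose (2 * (j + 1)) * ((2 * j + 2) * (2 * j + 1))
        = (2 * k).choose (2 * j) * (2 * (k - j)) * (2 * k - (2 * j + 1)) := by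
          rw [show 2 * (j + 1) = 2 * j + 1 + 1 by ring, ← mul_assoc, h2, mul_right_comm, h1,
            show 2 * k - 2 * j = 2 * (k - j) by omega]
      _ ≤ (2 * k - 1) ^ j * k.choose j * (2 * (k - j)) * ((2 * k - 1) * (2 * j + 1)) := by
          gcongr
          calc 2 * k - (2 * j + 1) ≤ 2 * k - 1 := by omega
            _ ≤ (2 * k - 1) * (2 * j + 1) := Nat.le_mul_of_pos_right _ (by omega)
      _ = (2 * k - 1) ^ (j + 1) * (k.choose j * (k - j)) * (2 * (2 * j + 1)) := by ring
      _ = (2 * k - 1) ^ (j + 1) * k.choose (j + 1) * ((2 * j + 2) * (2 * j + 1)) := by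
          rw [← h3]; ring

theorem Finset.sum_range_two_mul_add_one_of_odd_eq_zero {M : Type*} [AddCommMonoid M]
    (h : ℕ → M) (hodd : ∀ j, h (2 * j + 1) = 0) (m : ℕ) :
    ∑ i ∈ range (2 * m + 1), h i = ∑ j ∈ range (m + 1), h (2 * j) := by
  induction m with
  | zero => simp
  | succ m ih =>
    rw [show 2 * (m + 1) + 1 = 2 * m + 1 + 1 + 1 by ring, sum_range_succ, sum_range_succ, ih,
      hodd, add_zero, sum_range_succ _ (m + 1)]
    ring_nf

theorem add_pow_two_mul_add_sub_pow_two_mul_le (k : ℕ) (a b : ℝ) :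
    (a + b) ^ (2 * k) + (a - b) ^ (2 * k) ≤ 2 * (a ^ 2 + (2 * k - 1) * b ^ 2) ^ k := by
  rcases Nat.eq_zero_or_pos k with rfl | hk
  · norm_num
  have hK : ((2 * k - 1 : ℕ) : ℝ) = 2 * k - 1 := by
    rw [Nat.cast_sub (by omega)]; push_cast; ring
  have expand : (a + b) ^ (2 * k) + (a - b) ^ (2 * k)
      = ∑ i ∈ range (2 * k + 1), (b ^ i + (-b) ^ i) * a ^ (2 * k - i) * (2 * k).choose i := by
    rw [add_comm a, sub_eq_neg_add, add_pow, add_pow, ← sum_add_distrib]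
    exact sum_congr rfl fun i _ => by ring
  rw [expand, sum_range_two_mul_add_one_of_odd_eq_zero _ (fun j => by simp [Odd.neg_pow ⟨j, rfl⟩]),
    add_comm (a ^ 2), add_pow, mul_sum]
  refine sum_le_sum fun j hj => ?_
  have hjk : j ≤ k := Nat.lt_succ_iff.mp (mem_range.mp hj)
  have hchoose : ((2 * k).choose (2 * j) : ℝ) ≤ (2 * k - 1) ^ j * k.choose j := by
    rw [← hK]; exact_mod_cast Nat.choose_two_mul_le_pow_mul_choose hjk
  rw [Even.neg_pow ⟨j, by ring⟩, show 2 * k - 2 * j = 2 * (k - j) by omega, pow_mul, pow_mul]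
  calc (((b ^ 2) ^ j + (b ^ 2) ^ j) * (a ^ 2) ^ (k - j) * ((2 * k).choose (2 * j) : ℝ))
      = 2 * ((b ^ 2) ^ j * (a ^ 2) ^ (k - j)) * (2 * k).choose (2 * j) := by ring
    _ ≤ 2 * ((b ^ 2) ^ j * (a ^ 2) ^ (k - j)) * ((2 * k - 1) ^ j * k.choose j) := by gcongr
    _ = 2 * (((2 * k - 1) * b ^ 2) ^ j * (a ^ 2) ^ (k - j) * k.choose j) := by
        rw [mul_pow]; ring

theorem Finset.sum_add_pow_le_of_sum_pow_le {ι : Type*} (s : Finset ι) {X Y : ι → ℝ}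
    (hX : ∀ i ∈ s, 0 ≤ X i) (hY : ∀ i ∈ s, 0 ≤ Y i) {k : ℕ} (hk : k ≠ 0) {N a b : ℝ}
    (hN : 0 ≤ N) (ha : 0 ≤ a) (hb : 0 ≤ b)
    (hXa : ∑ i ∈ s, X i ^ k ≤ N * a ^ k) (hYb : ∑ i ∈ s, Y i ^ k ≤ N * b ^ k) :
    ∑ i ∈ s, (X i + Y i) ^ k ≤ N * (a + b) ^ k := by
  have hk1 : (1 : ℝ) ≤ k := by exact_mod_cast Nat.one_le_iff_ne_zero.mpr hk
  have root : ∀ c, 0 ≤ c → (N * c ^ k) ^ (1 / (k : ℝ)) = N ^ (1 / (k : ℝ)) * c := fun c hc => by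
    rw [Real.mul_rpow hN (by positivity), one_div, Real.pow_rpow_inv_natCast hc hk]
  have hXk : 0 ≤ ∑ i ∈ s, X i ^ k := sum_nonneg fun i hi => pow_nonneg (hX i hi) k
  have hYk : 0 ≤ ∑ i ∈ s, Y i ^ k := sum_nonneg fun i hi => pow_nonneg (hY i hi) k
  have minkowski := Real.Lp_add_le_of_nonneg s hk1 hX hY
  simp only [Real.rpow_natCast] at minkowski
  rw [← Real.rpow_le_rpow_iff (z := 1 / (k : ℝ))
    (sum_nonneg fun i hi => pow_nonneg (add_nonneg (hX i hi) (hY i hi)) k) (by positivity)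
    (by positivity)]
  calc _ ≤ _ := minkowski
    _ ≤ (N * a ^ k) ^ (1 / (k : ℝ)) + (N * b ^ k) ^ (1 / (k : ℝ)) := by gcongr
    _ = (N * (a + b) ^ k) ^ (1 / (k : ℝ)) := by
      rw [root a ha, root b hb, root (a + b) (by positivity)]; ring

noncomputable def walsh {n : ℕ} (w x : Fin n → Bool) : ℝ :=
  (-1 : ℝ) ^ #{i | w i && x i}

noncomputable def walshSum {n : ℕ} (c : (Fin n → Bool) → ℝ) (x : Fin n → Bool) : ℝ :=
  ∑ w, c w * walsh w x

theorem walsh_cons {n : ℕ} (b s : Bool) (w x : Fin n → Bool) :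
    walsh (Fin.cons b w) (Fin.cons s x) = (if b && s then -1 else 1) * walsh w x := by
  unfold walsh
  rw [card_filter, card_filter, Fin.sum_univ_succ, pow_add]
  cases b <;> cases s <;> simp

theorem hammingWt_cons {n : ℕ} (b : Bool) (w : Fin n → Bool) :
    hammingWt (Fin.cons b w) = (if b then 1 else 0) + hammingWt w := by
  unfold hammingWt
  rw [card_filter, card_filter, Fin.sum_univ_succ]
  simp only [Fin.cons_zero, Fin.cons_succ]

theorem Fintype.sum_fin_succ_bool {M : Type*} [AddCommMonoid M] {n : ℕ}
    (F : (Fin (n + 1) → Bool) → M) :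
    ∑ x, F x = ∑ x, F (Fin.cons false x) + ∑ x, F (Fin.cons true x) := by
  rw [← (Fin.consEquiv fun _ => Bool).sum_comp, Fintype.sum_prod_type, Fintype.sum_bool,
    add_comm]
  rfl

theorem walshSum_cons {n : ℕ} (c : (Fin (n + 1) → Bool) → ℝ) (s : Bool) (x : Fin n → Bool) :
    walshSum c (Fin.cons s x)
      = walshSum (fun w => c (Fin.cons false w)) x
        + (if s then -1 else 1) * walshSum (fun w => c (Fin.cons true w)) x := by
  simp only [walshSum, Fintype.sum_fin_succ_bool fun w => c w * walsh w (Fin.cons s x),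
    walsh_cons, mul_sum]
  congr 1 <;> refine sum_congr rfl fun w _ => ?_ <;> cases s <;> simp

theorem sum_pow_hammingWt_mul_sq_cons {n : ℕ} (K : ℝ) (c : (Fin (n + 1) → Bool) → ℝ) :
    ∑ w, K ^ hammingWt w * c w ^ 2
      = ∑ w, K ^ hammingWt w * c (Fin.cons false w) ^ 2
        + K * ∑ w, K ^ hammingWt w * c (Fin.cons true w) ^ 2 := by
  simp only [Fintype.sum_fin_succ_bool fun w => K ^ hammingWt w * c w ^ 2, hammingWt_cons,
    if_true, if_false, Bool.false_eq_true, zero_add, pow_add, pow_one, mul_sum, mul_assoc]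

theorem sum_walshSum_pow_le (k : ℕ) {n : ℕ} (c : (Fin n → Bool) → ℝ) :
    ∑ x, walshSum c x ^ (2 * k) ≤ 2 ^ n * (∑ w, (2 * k - 1 : ℝ) ^ hammingWt w * c w ^ 2) ^ k := by
  rcases eq_or_ne k 0 with rfl | hk
  · simp
  have hK : (0 : ℝ) ≤ 2 * k - 1 := by
    have : (1 : ℝ) ≤ k := by exact_mod_cast Nat.one_le_iff_ne_zero.mpr hk
    linarith
  induction n with
  | zero => simp [walshSum, walsh, hammingWt, pow_mul]
  | succ n ih =>
    set A := walshSum fun w => c (Fin.cons false w)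
    set B := walshSum fun w => c (Fin.cons true w)
    have weight_nonneg : ∀ c' : (Fin n → Bool) → ℝ,
        0 ≤ ∑ w, (2 * k - 1 : ℝ) ^ hammingWt w * c' w ^ 2 := fun c' =>
      sum_nonneg fun w _ => by positivity
    calc ∑ x, walshSum c x ^ (2 * k)
        = ∑ x, ((A x + B x) ^ (2 * k) + (A x - B x) ^ (2 * k)) := by
          rw [Fintype.sum_fin_succ_bool, ← sum_add_distrib]
          simp only [walshSum_cons]
          exact sum_congr rfl fun x _ => by simp only [Bool.false_eq_true, if_false, if_true]; ring
      _ ≤ ∑ x, 2 * ((A x) ^ 2 + (2 * k - 1) * (B x) ^ 2) ^ k :=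
          sum_le_sum fun x _ => add_pow_two_mul_add_sub_pow_two_mul_le k (A x) (B x)
      _ ≤ 2 * (2 ^ n * (∑ w, (2 * k - 1 : ℝ) ^ hammingWt w * c (Fin.cons false w) ^ 2
            + (2 * k - 1) * ∑ w, (2 * k - 1 : ℝ) ^ hammingWt w * c (Fin.cons true w) ^ 2) ^ k) := by
          rw [← mul_sum]
          refine mul_le_mul_of_nonneg_left (sum_add_pow_le_of_sum_pow_le _
            (fun x _ => sq_nonneg _) (fun x _ => by positivity) hk (by positivity)
            (weight_nonneg _) (mul_nonneg hK (weight_nonneg _)) ?_ ?_) zero_le_two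
          · simpa only [← pow_mul] using ih _
          · simpa only [mul_pow, ← pow_mul, ← mul_sum, mul_left_comm _ ((2 * k - 1 : ℝ) ^ k)]
              using mul_le_mul_of_nonneg_left (ih _) (pow_nonneg hK k)
      _ = 2 ^ (n + 1) * (∑ w, (2 * k - 1 : ℝ) ^ hammingWt w * c w ^ 2) ^ k := by
          rw [sum_pow_hammingWt_mul_sq_cons, pow_succ]; ring

theorem sum_mul_walshSum {n : ℕ} (f c : (Fin n → Bool) → ℝ) :
    ∑ x, f x * walshSum c x = 2 ^ n * ∑ w, c w * boolFourier f w := by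
  simp only [walshSum, boolFourier, mul_sum, sum_div]
  rw [sum_comm]
  refine sum_congr rfl fun w _ => sum_congr rfl fun x _ => ?_
  simp only [walsh]
  field_simp

theorem mul_le_abs_mul_add_pow_div {a b t M : ℝ} (ha : |a| ≤ M) (ht : 0 < t) (m : ℕ) :
    a * b ≤ |a| * t + M * (|b| ^ (m + 1) / t ^ m) := by
  have hM : 0 ≤ M := (abs_nonneg a).trans ha
  calc a * b ≤ |a| * |b| := by rw [← abs_mul]; exact le_abs_self _
    _ ≤ |a| * t + M * (|b| ^ (m + 1) / t ^ m) := by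
      rcases le_or_gt |b| t with hbt | hbt
      · have : 0 ≤ M * (|b| ^ (m + 1) / t ^ m) := by positivity
        nlinarith [abs_nonneg a]
      · have hb : |b| ≤ |b| ^ (m + 1) / t ^ m := by
          rw [le_div_iff₀ (by positivity), pow_succ']
          exact mul_le_mul_of_nonneg_left (pow_le_pow_left₀ ht.le hbt.le m) (abs_nonneg b)
        have : 0 ≤ |a| * t := by positivity
        nlinarith [abs_nonneg a, abs_nonneg b]

theorem le_four_mul_sqrt_of_forall_le {M V W : ℝ} {m : ℕ} (hM : M ≤ Real.exp m) (hV : 0 < V)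
    (h : ∀ t > 0, W ≤ t + M * (√V ^ (m + 1) / t ^ m)) : W ≤ 4 * √V := by
  have hs : 0 < √V := Real.sqrt_pos.mpr hV
  have he : Real.exp 1 < 3 := Real.exp_one_lt_d9.trans (by norm_num)
  have key : M * (√V ^ (m + 1) / (Real.exp 1 * √V) ^ m) = M / Real.exp m * √V := by
    rw [mul_pow, ← Real.exp_nat_mul, mul_one, pow_succ]
    field_simp
  calc W ≤ Real.exp 1 * √V + M / Real.exp m * √V := key ▸ h _ (by positivity)
    _ ≤ 3 * √V + 1 * √V := by
      gcongr
      exact (div_le_one (Real.exp_pos _)).mpr hM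
    _ = 4 * √V := by ring

noncomputable def levelWeight {n : ℕ} (f : (Fin n → Bool) → ℝ) (d : ℕ) : ℝ :=
  ∑ w ∈ univ.filter (fun w => hammingWt w = d), boolFourier f w ^ 2

/-- The Fourier coefficients of the level-`d` part of `f`. -/
noncomputable def levelCoeff {n : ℕ} (f : (Fin n → Bool) → ℝ) (d : ℕ) (w : Fin n → Bool) : ℝ :=
  if hammingWt w = d then boolFourier f w else 0

theorem levelWeight_nonneg {n : ℕ} (f : (Fin n → Bool) → ℝ) (d : ℕ) : 0 ≤ levelWeight f d :=
  sum_nonneg fun _ _ => sq_nonneg _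

theorem sum_levelCoeff {n : ℕ} (f : (Fin n → Bool) → ℝ) (d : ℕ) (g : (Fin n → Bool) → ℝ → ℝ)
    (hg : ∀ w, g w 0 = 0) :
    ∑ w, g w (levelCoeff f d w) = ∑ w with hammingWt w = d, g w (boolFourier f w) := by
  rw [sum_filter]
  exact sum_congr rfl fun w _ => by by_cases hw : hammingWt w = d <;> simp [levelCoeff, hw, hg]

theorem sum_mul_walshSum_levelCoeff {n : ℕ} (f : (Fin n → Bool) → ℝ) (d : ℕ) :
    ∑ x, f x * walshSum (levelCoeff f d) x = 2 ^ n * levelWeight f d := by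
  rw [sum_mul_walshSum, sum_levelCoeff f d (fun w a => a * boolFourier f w) fun _ => zero_mul _]
  simp only [levelWeight, sq]

theorem sum_pow_hammingWt_mul_levelCoeff_sq {n : ℕ} (f : (Fin n → Bool) → ℝ) (d : ℕ) (K : ℝ) :
    ∑ w, K ^ hammingWt w * levelCoeff f d w ^ 2 = K ^ d * levelWeight f d := by
  rw [sum_levelCoeff f d (fun w a => K ^ hammingWt w * a ^ 2) fun _ => by simp, levelWeight,
    mul_sum]
  exact sum_congr rfl fun w hw => by rw [(mem_filter.mp hw).2]

theorem levelWeight_le_add {n : ℕ} {f : (Fin n → Bool) → ℝ} {M : ℝ} (d : ℕ) {k : ℕ}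
    (hk : k ≠ 0) (hf1 : ∑ x, |f x| = 2 ^ n) (hfM : ∀ x, |f x| ≤ M) {t : ℝ} (ht : 0 < t) :
    levelWeight f d ≤
      t + M * (√((2 * k - 1) ^ d * levelWeight f d) ^ (2 * k - 1 + 1) / t ^ (2 * k - 1)) := by
  set g := walshSum (levelCoeff f d)
  have hm : 2 * k - 1 + 1 = 2 * k := by omega
  have hM : 0 ≤ M := (abs_nonneg _).trans (hfM 0)
  have hK : (0 : ℝ) ≤ 2 * k - 1 := by
    have : (1 : ℝ) ≤ k := by exact_mod_cast Nat.one_le_iff_ne_zero.mpr hk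
    linarith
  refine le_of_mul_le_mul_left ?_ (by positivity : (0 : ℝ) < 2 ^ n)
  calc 2 ^ n * levelWeight f d = ∑ x, f x * g x := (sum_mul_walshSum_levelCoeff f d).symm
    _ ≤ ∑ x, (|f x| * t + M * (|g x| ^ (2 * k - 1 + 1) / t ^ (2 * k - 1))) :=
        sum_le_sum fun x _ => mul_le_abs_mul_add_pow_div (hfM x) ht _
    _ = 2 ^ n * t + M * (∑ x, g x ^ (2 * k)) / t ^ (2 * k - 1) := by
        simp only [hm, Even.pow_abs ⟨k, two_mul k⟩, sum_add_distrib, ← sum_mul, hf1,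
          ← mul_sum, ← sum_div, mul_div_assoc]
    _ ≤ 2 ^ n * t + M * (2 ^ n * ((2 * k - 1) ^ d * levelWeight f d) ^ k) / t ^ (2 * k - 1) := by
        gcongr
        exact sum_pow_hammingWt_mul_levelCoeff_sq f d _ ▸ sum_walshSum_pow_le k _
    _ = _ := by
        rw [hm, pow_mul, Real.sq_sqrt (by have := levelWeight_nonneg f d; positivity)]; ring

theorem levelWeight_le {n : ℕ} {f : (Fin n → Bool) → ℝ} {M : ℝ} (d : ℕ) {k : ℕ} (hk : k ≠ 0)
    (hM : M ≤ Real.exp (2 * k - 1)) (hf1 : ∑ x, |f x| = 2 ^ n) (hfM : ∀ x, |f x| ≤ M) :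
    levelWeight f d ≤ 16 * (2 * k - 1) ^ d := by
  set W := levelWeight f d
  set K : ℝ := 2 * k - 1
  have hK : 1 ≤ K := by
    have : (1 : ℝ) ≤ k := by exact_mod_cast Nat.one_le_iff_ne_zero.mpr hk
    linarith
  have hW : 0 ≤ W := levelWeight_nonneg f d
  rcases hW.eq_or_lt with hW0 | hWpos
  · rw [← hW0]; positivity
  have hMexp : M ≤ Real.exp (2 * k - 1 : ℕ) := by
    rwa [Nat.cast_sub (by omega), Nat.cast_mul, Nat.cast_ofNat, Nat.cast_one]
  have hbound : W ≤ 4 * (√(K ^ d) * √W) := by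
    rw [← Real.sqrt_mul (by positivity)]
    exact le_four_mul_sqrt_of_forall_le hMexp (by positivity) fun t ht =>
      levelWeight_le_add d hk hf1 hfM ht
  have hsqrt : √W ≤ 4 * √(K ^ d) := by
    nlinarith [Real.mul_self_sqrt hW, Real.sqrt_pos.mpr hWpos]
  calc W = √W ^ 2 := (Real.sq_sqrt hW).symm
    _ ≤ (4 * √(K ^ d)) ^ 2 := by gcongr
    _ = 16 * K ^ d := by rw [mul_pow, Real.sq_sqrt (by positivity)]; norm_num

/-- KKL-type level-2 bound: there is a universal constant `C > 0` such that for every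
`f : {0,1}ⁿ → ℝ` with `‖f‖₁ = 1` and `‖f‖_∞ ≤ M` (with `M ≥ 2`),
`∑_{|w|=2} f̂(w)² ≤ C (log M)²`. -/
theorem level_two_weight_bound :
    ∃ C : ℝ, 0 < C ∧ ∀ (n : ℕ) (f : (Fin n → Bool) → ℝ) (M : ℝ), 2 ≤ M →
      (∑ x : Fin n → Bool, |f x|) / 2 ^ n = 1 → (∀ x, |f x| ≤ M) →
      ∑ w ∈ univ.filter (fun w => hammingWt w = 2), boolFourier f w ^ 2
        ≤ C * Real.log M ^ 2 := by
  refine ⟨256, by norm_num, fun n f M hM hf1 hfM => ?_⟩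
  have hL : 1 / 2 < Real.log M := by
    linarith [Real.log_two_gt_d9, Real.log_le_log two_pos hM]
  set k := ⌈Real.log M⌉₊
  have hk : k ≠ 0 := (Nat.ceil_pos.mpr (by linarith)).ne'
  have hk1 : (1 : ℝ) ≤ k := by exact_mod_cast Nat.one_le_iff_ne_zero.mpr hk
  have hLk : Real.log M ≤ k := Nat.le_ceil _
  have hkL : (k : ℝ) < Real.log M + 1 := Nat.ceil_lt_add_one (by linarith)
  have hM' : M ≤ Real.exp (2 * k - 1) :=
    (Real.log_le_iff_le_exp (by linarith)).mp (by linarith)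
  have hf1' : ∑ x, |f x| = 2 ^ n := by
    rwa [div_eq_one_iff_eq (by positivity)] at hf1
  calc _ ≤ 16 * (2 * k - 1 : ℝ) ^ 2 := levelWeight_le 2 hk hM' hf1' hfM
    _ ≤ 16 * (4 * Real.log M) ^ 2 := by gcongr <;> linarith
    _ = 256 * Real.log M ^ 2 := by ring
end
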